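/- arXiv:0810.0135 — 4 statements merged into one kernel-verified Lean document; each statement's English description precedes it below -/
import Mathlib

section
/- Let 0 < λ < 1 and d ≥ 2. The sequence v*_0 = 1, v*_k = 1 - (1-λ v*_{k-1})^{1/d} satisfies limsup_{k→∞} v*_k/(λ/d)^k < ∞. Combined with the lower bound v*_k ≥ (λ/d)^k, this gives v*_k = Θ((λ/d)^k) as k → ∞. -/
open Filter Finset

/-- Geometric sum based inequality: for `t ∈ [0,1]`, `d * t^d * (1-t) ≤ 1 - t^d`. -/
lemma geom_aux (t : ℝ) (ht0 : 0 ≤ t) (ht1 : t ≤ 1) (d : ℕ) :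
    (d : ℝ) * t ^ d * (1 - t) ≤ 1 - t ^ d := by
  have hsum : (d : ℝ) * t ^ d ≤ ∑ i ∈ range d, t ^ i := by
    calc (d : ℝ) * t ^ d = ∑ _i ∈ range d, t ^ d := by
          rw [Finset.sum_const, card_range, nsmul_eq_mul]
      _ ≤ ∑ i ∈ range d, t ^ i := by
          refine Finset.sum_le_sum fun i hi => ?_
          exact pow_le_pow_of_le_one ht0 ht1 (le_of_lt (mem_range.mp hi))
  have hgeom : (∑ i ∈ range d, t ^ i) * (1 - t) = 1 - t ^ d := by
    linear_combination (-1 : ℝ) * geom_sum_mul t d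
  calc (d : ℝ) * t ^ d * (1 - t) ≤ (∑ i ∈ range d, t ^ i) * (1 - t) :=
        mul_le_mul_of_nonneg_right hsum (by linarith)
    _ = 1 - t ^ d := hgeom

/-- Key inequalities for `t = (1-x)^(1/d)` with `x ∈ [0,1)`. -/
lemma key_aux (x : ℝ) (hx0 : 0 ≤ x) (hx1 : x < 1) (d : ℕ) (hd : 1 ≤ d) :
    (1 - x) ^ (1 / (d : ℝ)) ≤ 1 ∧ 1 - x ≤ (1 - x) ^ (1 / (d : ℝ)) ∧
    (1 - x) ^ (1 / (d : ℝ)) ≤ 1 - x / d ∧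
    (d : ℝ) * (1 - x) * (1 - (1 - x) ^ (1 / (d : ℝ))) ≤ x := by
  have hdne : (d : ℝ) ≠ 0 := Nat.cast_ne_zero.mpr (by omega)
  have hdR : (1 : ℝ) ≤ d := by exact_mod_cast hd
  have hy : (0 : ℝ) < 1 - x := by linarith
  set t : ℝ := (1 - x) ^ (1 / (d : ℝ)) with ht
  have ht0 : 0 ≤ t := Real.rpow_nonneg hy.le _
  have htd : t ^ d = 1 - x := by
    rw [ht, ← Real.rpow_natCast ((1 - x) ^ (1 / (d : ℝ))) d,
        ← Real.rpow_mul hy.le, one_div, inv_mul_cancel₀ hdne, Real.rpow_one]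
  have ht1 : t ≤ 1 := Real.rpow_le_one hy.le (by linarith) (by positivity)
  refine ⟨ht1, ?_, ?_, ?_⟩
  · -- 1 - x = t^d ≤ t
    have := pow_le_of_le_one ht0 ht1 (show d ≠ 0 by omega)
    linarith [htd ▸ this]
  · -- Bernoulli: (1 - x/d)^d ≥ 1 - x
    have hxd : x / d ≤ x := div_le_self hx0 hdR
    have hb : (1 : ℝ) - x ≤ (1 - x / d) ^ d := by
      have h2 : (-2 : ℝ) ≤ -(x / d) := by
        have : 0 ≤ x / d := by positivity
        linarith
      have := one_add_mul_le_pow h2 d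
      have heq : 1 + (d : ℝ) * -(x / d) = 1 - x := by field_simp; ring
      have heq2 : (1 : ℝ) + -(x / d) = 1 - x / d := by ring
      rw [heq, heq2] at this
      exact this
    have hnn : (0 : ℝ) ≤ 1 - x / d := by linarith
    have : t ^ d ≤ (1 - x / d) ^ d := by rw [htd]; exact hb
    exact le_of_pow_le_pow_left₀ (by omega) hnn this
  · have := geom_aux t ht0 ht1 d
    rw [htd] at this
    linarith

set_option maxHeartbeats 2000000 in
/-- for d ≥ 2, limsup v*_k/(λ/d)^k < ∞; combined with the lower
bound v*_k ≥ (λ/d)^k this gives v*_k = Θ((λ/d)^k). -/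
theorem stmt7 (lam : ℝ) (hlam0 : 0 < lam) (hlam1 : lam < 1) (d : ℕ) (hd : 2 ≤ d)
    (v : ℕ → ℝ) (hv0 : v 0 = 1)
    (hv : ∀ k, v (k + 1) = 1 - (1 - lam * v k) ^ (1 / (d : ℝ))) :
    Filter.limsup (fun k => ((v k / (lam / d) ^ k : ℝ) : EReal)) Filter.atTop < ⊤ ∧
    (∀ k, (lam / d) ^ k ≤ v k) := by
  have hd1 : 1 ≤ d := by omega
  have hdR : (1 : ℝ) ≤ d := by exact_mod_cast hd1
  have hdpos : (0 : ℝ) < d := by linarith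
  -- basic bounds: 0 ≤ v k ≤ lam ^ k
  have hbnd : ∀ k, 0 ≤ v k ∧ v k ≤ lam ^ k := by
    intro k
    induction k with
    | zero => simp [hv0]
    | succ k ih =>
      obtain ⟨h0, h1⟩ := ih
      have hvk1 : v k ≤ 1 := h1.trans (pow_le_one₀ hlam0.le hlam1.le)
      have hx0 : 0 ≤ lam * v k := mul_nonneg hlam0.le h0
      have hxlam : lam * v k ≤ lam := by nlinarith
      have hx1 : lam * v k < 1 := lt_of_le_of_lt hxlam hlam1
      obtain ⟨ht1, hlow, hbern, hquad⟩ := key_aux (lam * v k) hx0 hx1 d hd1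
      rw [hv k]
      constructor
      · linarith
      · have h2 : 1 - (1 - lam * v k) ^ (1 / (d : ℝ)) ≤ lam * v k := by linarith
        have : lam * v k ≤ lam * lam ^ k := by nlinarith
        calc 1 - (1 - lam * v k) ^ (1 / (d : ℝ)) ≤ lam * v k := h2
          _ ≤ lam ^ (k + 1) := by rw [pow_succ]; nlinarith
  -- lower bound
  have hlower : ∀ k, (lam / d) ^ k ≤ v k := by
    intro k
    induction k with
    | zero => simp [hv0]
    | succ k ih =>
      obtain ⟨h0, h1⟩ := hbnd k
      have hvk1 : v k ≤ 1 := h1.trans (pow_le_one₀ hlam0.le hlam1.le)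
      have hx0 : 0 ≤ lam * v k := mul_nonneg hlam0.le h0
      have hx1 : lam * v k < 1 := lt_of_le_of_lt (by nlinarith) hlam1
      obtain ⟨ht1, hlow, hbern, hquad⟩ := key_aux (lam * v k) hx0 hx1 d hd1
      rw [hv k]
      have h3 : lam * v k / d ≤ 1 - (1 - lam * v k) ^ (1 / (d : ℝ)) := by linarith
      calc (lam / d) ^ (k + 1) = (lam / d) * (lam / d) ^ k := by rw [pow_succ]; ring
        _ ≤ (lam / d) * v k := by
            refine mul_le_mul_of_nonneg_left ih (by positivity)
        _ = lam * v k / d := by ring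
        _ ≤ 1 - (1 - lam * v k) ^ (1 / (d : ℝ)) := h3
  refine ⟨?_, hlower⟩
  -- upper bound with exponential correction
  have hupper : ∀ k, v k ≤
      Real.exp ((∑ j ∈ range k, lam ^ (j + 1)) / (1 - lam)) * (lam / d) ^ k := by
    intro k
    induction k with
    | zero => simp [hv0]
    | succ k ih =>
      obtain ⟨h0, h1⟩ := hbnd k
      have hvk1 : v k ≤ 1 := h1.trans (pow_le_one₀ hlam0.le hlam1.le)
      have hx0 : 0 ≤ lam * v k := mul_nonneg hlam0.le h0
      have hxlam : lam * v k ≤ lam := by nlinarith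
      have hx1 : lam * v k < 1 := lt_of_le_of_lt hxlam hlam1
      obtain ⟨ht1, hlow, hbern, hquad⟩ := key_aux (lam * v k) hx0 hx1 d hd1
      set x := lam * v k with hxdef
      clear_value x
      set e := Real.exp (lam ^ (k + 1) / (1 - lam)) with hedef
      have hepos0 : 0 < e := Real.exp_pos _
      clear_value e
      have he1 : 1 + lam ^ (k + 1) / (1 - lam) ≤ e := by
        rw [hedef]; linarith [Real.add_one_le_exp (lam ^ (k + 1) / (1 - lam))]
      -- x ≤ lam ^ (k+1)
      have hxk : x ≤ lam ^ (k + 1) := by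
        rw [pow_succ]; rw [hxdef]; nlinarith
      -- (1 - x) * e ≥ 1
      have hkey : 1 ≤ (1 - x) * e := by
        have h4 : (1 - x) * (1 + lam ^ (k + 1) / (1 - lam)) ≥ 1 := by
          have hden : (0 : ℝ) < 1 - lam := by linarith
          rw [ge_iff_le, ← sub_nonneg]
          have expand : (1 - x) * (1 + lam ^ (k + 1) / (1 - lam)) - 1
              = ((1 - x) * lam ^ (k + 1) - x * (1 - lam)) / (1 - lam) := by
            field_simp; ring
          rw [expand]
          apply div_nonneg _ hden.le
          nlinarith
        have hnn : (0 : ℝ) ≤ 1 - x := by linarith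
        calc (1 : ℝ) ≤ (1 - x) * (1 + lam ^ (k + 1) / (1 - lam)) := h4
          _ ≤ (1 - x) * e := mul_le_mul_of_nonneg_left he1 hnn
      -- step bound: v (k+1) ≤ (lam/d) * v k * e
      have hstep : v (k + 1) ≤ (lam / d) * v k * e := by
        rw [hv k, ← hxdef]
        have hepos : 0 < e := hepos0
        set t : ℝ := (1 - x) ^ (1 / (d : ℝ)) with htdef
        clear_value t
        have hw : 0 ≤ 1 - t := by linarith
        have hnn : 0 ≤ (d : ℝ) * (1 - t) := mul_nonneg hdpos.le hw
        have h6 := mul_le_mul_of_nonneg_left hkey hnn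
        have h7 : (d : ℝ) * (1 - x) * (1 - t) * e ≤ x * e :=
          mul_le_mul_of_nonneg_right hquad hepos.le
        have h5 : (d : ℝ) * (1 - t) ≤ x * e := by nlinarith [h6, h7]
        have hgoal : 1 - t ≤ x * e / d := by
          rw [le_div_iff₀ hdpos]; nlinarith [h5]
        calc 1 - t ≤ x * e / d := hgoal
          _ = (lam / d) * v k * e := by rw [hxdef]; ring
      calc v (k + 1) ≤ (lam / d) * v k * e := hstep
        _ ≤ (lam / d) * (Real.exp ((∑ j ∈ range k, lam ^ (j + 1)) / (1 - lam)) * (lam / d) ^ k) * e := by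
            have hld : (0 : ℝ) ≤ lam / d := by positivity
            have hepos : 0 < e := hepos0
            have := mul_le_mul_of_nonneg_left ih hld
            nlinarith
        _ = Real.exp ((∑ j ∈ range (k + 1), lam ^ (j + 1)) / (1 - lam)) * (lam / d) ^ (k + 1) := by
            rw [Finset.sum_range_succ, add_div, Real.exp_add, hedef]
            ring
  -- uniform bound on v k / (lam/d)^k
  set B : ℝ := Real.exp (lam / ((1 - lam) * (1 - lam))) with hBdef
  have hratio : ∀ k, v k / (lam / d) ^ k ≤ B := by
    intro k
    have hpow : (0 : ℝ) < (lam / d) ^ k := by positivity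
    rw [div_le_iff₀ hpow]
    have hsum : (∑ j ∈ range k, lam ^ (j + 1)) ≤ lam / (1 - lam) := by
      have hne : lam ≠ 1 := ne_of_lt hlam1
      have : (∑ j ∈ range k, lam ^ j) = (lam ^ k - 1) / (lam - 1) := geom_sum_eq hne k
      have hs : (∑ j ∈ range k, lam ^ (j + 1)) = lam * ∑ j ∈ range k, lam ^ j := by
        rw [Finset.mul_sum]
        exact Finset.sum_congr rfl fun j _ => by rw [pow_succ]; ring
      rw [hs, this]
      have h1 : (0 : ℝ) < 1 - lam := by linarith
      have hne1 : lam - 1 ≠ 0 := by linarith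
      have hne2 : (1 : ℝ) - lam ≠ 0 := by linarith
      have heq : lam * ((lam ^ k - 1) / (lam - 1)) = lam * (1 - lam ^ k) / (1 - lam) := by
        field_simp; ring
      rw [heq, div_le_div_iff₀ h1 h1]
      nlinarith [pow_nonneg hlam0.le k, mul_nonneg (mul_nonneg hlam0.le h1.le) (pow_nonneg hlam0.le k)]
    have hexp : Real.exp ((∑ j ∈ range k, lam ^ (j + 1)) / (1 - lam)) ≤ B := by
      rw [hBdef]
      apply Real.exp_le_exp.mpr
      rw [← div_div]
      have h1 : (0 : ℝ) < 1 - lam := by linarith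
      gcongr

    calc v k ≤ Real.exp ((∑ j ∈ range k, lam ^ (j + 1)) / (1 - lam)) * (lam / d) ^ k :=
          hupper k
      _ ≤ B * (lam / d) ^ k := mul_le_mul_of_nonneg_right hexp hpow.le
  -- conclude limsup < ⊤
  have hE : ∀ k, ((v k / (lam / d) ^ k : ℝ) : EReal) ≤ ((B : ℝ) : EReal) := fun k =>
    EReal.coe_le_coe_iff.mpr (hratio k)
  have hls : Filter.limsup (fun k => ((v k / (lam / d) ^ k : ℝ) : EReal)) Filter.atTop
      ≤ ((B : ℝ) : EReal) :=
    Filter.limsup_le_of_le (h := Filter.Eventually.of_forall hE)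
  exact lt_of_le_of_lt hls (EReal.coe_lt_top B)
end

section
/- Let 0 < λ < 1 and d ≥ 1. Suppose v⁺, v⁻ : [0,∞) → ℓ∞ are two solutions to the ODE system dv_k/dt = λ(v_{k-1} - v_k) - (1-v_{k+1})^d + (1-v_k)^d for k ≥ 1, with v_0(t) ≡ 1 and with coordinates in [0,1] and nonincreasing in k. If v⁺_k(0) ≥ v⁻_k(0) for all k, then v⁺_k(t) ≥ v⁻_k(t) for all k and all t ≥ 0. -/
/-!
Write `e_k = v⁻_k - v⁺_k`. Where `e_{k+1} ≥ 0`, the drift of `e_{k+1}` is at most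
`(λ + d) * sup_j e_j`: the term `(1 - v_{k+1})^d` is monotone in the right direction, and the
other two terms are `λ`- and `d`-Lipschitz on `[0,1]`. Starting from `e ≤ 1` and feeding this
bound into a barrier argument for every coordinate yields the Picard-type estimates
`e_k(t) ≤ ((λ + d) t)^n / n!` for all `n`, whence `e_k(t) ≤ 0`.
-/

open Set Filter Topology Nat

lemma pow_sub_pow_le_natCast_mul {x y B : ℝ} (d : ℕ) (hx : x ∈ Icc (0 : ℝ) 1)
    (hy : 0 ≤ y) (hxy : x - y ≤ B) (hB : 0 ≤ B) : x ^ d - y ^ d ≤ d * B := by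
  rcases le_total x y with h | h
  · have : x ^ d ≤ y ^ d := pow_le_pow_left₀ hx.1 h d
    linarith [mul_nonneg (Nat.cast_nonneg d : (0 : ℝ) ≤ d) hB]
  · have hmax : max |x| |y| ^ (d - 1) ≤ 1 :=
      pow_le_one₀ (le_max_of_le_left (abs_nonneg x)) <| max_le
        (abs_le.2 ⟨by linarith [hx.1], hx.2⟩) (abs_le.2 ⟨by linarith, by linarith [hx.2]⟩)
    calc x ^ d - y ^ d ≤ |x ^ d - y ^ d| := le_abs_self _
      _ ≤ |x - y| * d * max |x| |y| ^ (d - 1) := abs_pow_sub_pow_le x y d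
      _ ≤ (x - y) * d * 1 := by
        rw [abs_of_nonneg (sub_nonneg.2 h)]
        gcongr
      _ ≤ d * B := by nlinarith [(Nat.cast_nonneg d : (0 : ℝ) ≤ d)]

lemma nonpos_of_hasDerivAt_nonpos_of_nonneg {f f' : ℝ → ℝ} {a : ℝ}
    (hf : ∀ x, a ≤ x → HasDerivAt f (f' x) x) (ha : f a ≤ 0)
    (hf' : ∀ x, a ≤ x → 0 ≤ f x → f' x ≤ 0) : ∀ x, a ≤ x → f x ≤ 0 := by
  intro x hx
  -- Compare `f` with the strictly increasing barriers `ε * (t - a + 1)`, then let `ε → 0`.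
  have hbarrier : ∀ ε > 0, f x ≤ ε * (x - a + 1) := by
    intro ε hε
    refine image_le_of_deriv_right_lt_deriv_boundary
      (B := fun t => ε * (t - a + 1)) (B' := fun _ => ε)
      (fun t ht => (hf t ht.1).continuousAt.continuousWithinAt)
      (fun t ht => (hf t ht.1).hasDerivWithinAt) (by linarith)
      (fun t => by simpa using ((hasDerivAt_id t).sub_const a).add_const 1 |>.const_mul ε)
      (fun t ht hft => ?_) ⟨hx, le_rfl⟩
    have : 0 ≤ f t := by rw [hft]; nlinarith [ht.1]
    linarith [hf' t ht.1 this]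
  refine le_of_forall_pos_le_add fun δ hδ => ?_
  have hpos : 0 < x - a + 1 := by linarith
  simpa [div_mul_cancel₀ δ hpos.ne'] using hbarrier (δ / (x - a + 1)) (by positivity)

lemma hasDerivAt_pow_succ_div_factorial (c t : ℝ) (n : ℕ) :
    HasDerivAt (fun s => (c * s) ^ (n + 1) / (n + 1)!) (c * ((c * t) ^ n / n !)) t := by
  have h := (((hasDerivAt_id t).const_mul c).pow (n + 1)).div_const ((n + 1)! : ℝ)
  refine h.congr_deriv ?_
  rw [Nat.factorial_succ, Nat.add_sub_cancel, id]
  push_cast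
  field_simp

/-- `lcqDrift lam d v k` is the right-hand side of the equation for `v_{k+1}` (not `v_k`). -/
def lcqDrift (lam : ℝ) (d : ℕ) (v : ℕ → ℝ) (k : ℕ) : ℝ :=
  lam * (v k - v (k + 1)) - (1 - v (k + 2)) ^ d + (1 - v (k + 1)) ^ d

lemma lcqDrift_sub_le {lam B : ℝ} {d : ℕ} {u w : ℕ → ℝ} {k : ℕ} (hlam : 0 ≤ lam)
    (hu : ∀ j, u j ≤ 1) (hw : ∀ j, w j ∈ Icc (0 : ℝ) 1) (hB : ∀ j, u j - w j ≤ B)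
    (hk : w (k + 1) ≤ u (k + 1)) :
    lcqDrift lam d u k - lcqDrift lam d w k ≤ (lam + d) * B := by
  have hlin : lam * (u k - u (k + 1)) - lam * (w k - w (k + 1)) ≤ lam * B := by
    nlinarith [hB k]
  have hLip : (1 - w (k + 2)) ^ d - (1 - u (k + 2)) ^ d ≤ d * B :=
    pow_sub_pow_le_natCast_mul d ⟨by linarith [(hw (k + 2)).2], by linarith [(hw (k + 2)).1]⟩
      (by linarith [hu (k + 2)])
      (by linarith [hB (k + 2)]) (by linarith [hB (k + 1)])
  have hmono : (1 - u (k + 1)) ^ d ≤ (1 - w (k + 1)) ^ d :=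
    pow_le_pow_left₀ (by linarith [hu (k + 1)]) (by linarith) d
  unfold lcqDrift
  linarith

section Comparison

variable {e e' : ℕ → ℝ → ℝ} {c M : ℝ}

lemma le_mul_pow_div_factorial_of_drift_le (hc : 0 ≤ c) (hM : 0 ≤ M)
    (he_le : ∀ k t, 0 ≤ t → e k t ≤ M) (he_zero : ∀ t, 0 ≤ t → e 0 t ≤ 0)
    (he_init : ∀ k, e (k + 1) 0 ≤ 0) (he' : ∀ k t, 0 ≤ t → HasDerivAt (e (k + 1)) (e' k t) t)
    (hdrift : ∀ k t B, 0 ≤ t → (∀ j, e j t ≤ B) → 0 ≤ e (k + 1) t → e' k t ≤ c * B) (n : ℕ) :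
    ∀ k t, 0 ≤ t → e k t ≤ M * ((c * t) ^ n / n !) := by
  induction n with
  | zero => simpa using he_le
  | succ n ih =>
    have hbound_nonneg : ∀ t, 0 ≤ t → 0 ≤ M * ((c * t) ^ (n + 1) / (n + 1)!) := fun t ht => by
      positivity
    rintro (_ | k) t ht
    · exact (he_zero t ht).trans (hbound_nonneg t ht)
    have key := nonpos_of_hasDerivAt_nonpos_of_nonneg
      (f := fun s => e (k + 1) s - M * ((c * s) ^ (n + 1) / (n + 1)!))
      (fun s hs => (he' k s hs).sub ((hasDerivAt_pow_succ_div_factorial c s n).const_mul M))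
      (by simpa using he_init k)
      (fun s hs hfs => by
        have := hdrift k s _ hs (ih · s hs) (by linarith [hbound_nonneg s hs])
        linarith)
      t ht
    linarith

lemma nonpos_of_drift_le (hc : 0 ≤ c) (hM : 0 ≤ M)
    (he_le : ∀ k t, 0 ≤ t → e k t ≤ M) (he_zero : ∀ t, 0 ≤ t → e 0 t ≤ 0)
    (he_init : ∀ k, e (k + 1) 0 ≤ 0) (he' : ∀ k t, 0 ≤ t → HasDerivAt (e (k + 1)) (e' k t) t)
    (hdrift : ∀ k t B, 0 ≤ t → (∀ j, e j t ≤ B) → 0 ≤ e (k + 1) t → e' k t ≤ c * B) :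
    ∀ k t, 0 ≤ t → e k t ≤ 0 := fun k t ht => by
  have hlim := (FloorSemiring.tendsto_pow_div_factorial_atTop (c * t)).const_mul M
  rw [mul_zero] at hlim
  exact ge_of_tendsto' hlim fun n =>
    le_mul_pow_div_factorial_of_drift_le hc hM he_le he_zero he_init he' hdrift n k t ht

end Comparison

theorem stmt12_general (lam : ℝ) (hl0 : 0 < lam) (d : ℕ)
    (vp vm : ℕ → ℝ → ℝ)
    (hp0 : ∀ t, 0 ≤ t → vp 0 t = 1) (hm0 : ∀ t, 0 ≤ t → vm 0 t = 1)
    (hpbdd : ∀ k t, 0 ≤ t → vp k t ∈ Set.Icc (0 : ℝ) 1)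
    (hmbdd : ∀ k t, 0 ≤ t → vm k t ∈ Set.Icc (0 : ℝ) 1)
    (hpode : ∀ k t, 0 ≤ t → HasDerivAt (vp (k + 1))
      (lam * (vp k t - vp (k + 1) t) - (1 - vp (k + 2) t) ^ d + (1 - vp (k + 1) t) ^ d) t)
    (hmode : ∀ k t, 0 ≤ t → HasDerivAt (vm (k + 1))
      (lam * (vm k t - vm (k + 1) t) - (1 - vm (k + 2) t) ^ d + (1 - vm (k + 1) t) ^ d) t)
    (hinit : ∀ k, vm k 0 ≤ vp k 0) :
    ∀ k t, 0 ≤ t → vm k t ≤ vp k t := by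
  have hdiff := nonpos_of_drift_le (e := fun k t => vm k t - vp k t)
    (e' := fun k t => lcqDrift lam d (vm · t) k - lcqDrift lam d (vp · t) k)
    (c := lam + d) (M := 1) (by positivity) zero_le_one
    (fun k t ht => by linarith [(hmbdd k t ht).2, (hpbdd k t ht).1])
    (fun t ht => by simp [hm0 t ht, hp0 t ht])
    (fun k => by linarith [hinit (k + 1)])
    (fun k t ht => (hmode k t ht).sub (hpode k t ht))
    (fun k t B ht hB hk => lcqDrift_sub_le hl0.le (fun j => (hmbdd j t ht).2)
      (fun j => hpbdd j t ht) hB (by linarith))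
  exact fun k t ht => sub_nonpos.1 (hdiff k t ht)

/-- comparison lemma for the LCQ(d) fluid limit: the countable
ODE system dv_k/dt = λ(v_{k-1}-v_k) - (1-v_{k+1})^d + (1-v_k)^d preserves
coordinatewise ordering of initial conditions. -/
theorem stmt12 (lam : ℝ) (hl0 : 0 < lam) (hl1 : lam < 1) (d : ℕ) (hd : 1 ≤ d)
    (vp vm : ℕ → ℝ → ℝ)
    (hp0 : ∀ t, 0 ≤ t → vp 0 t = 1) (hm0 : ∀ t, 0 ≤ t → vm 0 t = 1)
    (hpbdd : ∀ k t, 0 ≤ t → vp k t ∈ Set.Icc (0 : ℝ) 1)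
    (hmbdd : ∀ k t, 0 ≤ t → vm k t ∈ Set.Icc (0 : ℝ) 1)
    (hpmono : ∀ k t, 0 ≤ t → vp (k + 1) t ≤ vp k t)
    (hmmono : ∀ k t, 0 ≤ t → vm (k + 1) t ≤ vm k t)
    (hpode : ∀ k t, 0 ≤ t → HasDerivAt (vp (k + 1))
      (lam * (vp k t - vp (k + 1) t) - (1 - vp (k + 2) t) ^ d + (1 - vp (k + 1) t) ^ d) t)
    (hmode : ∀ k t, 0 ≤ t → HasDerivAt (vm (k + 1))
      (lam * (vm k t - vm (k + 1) t) - (1 - vm (k + 2) t) ^ d + (1 - vm (k + 1) t) ^ d) t)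
    (hinit : ∀ k, vm k 0 ≤ vp k 0) :
    ∀ k t, 0 ≤ t → vm k t ≤ vp k t :=
  stmt12_general lam hl0 d vp vm hp0 hm0 hpbdd hmbdd hpode hmode hinit
end

section
/- Let 0 < λ < 1, d ≥ 1. If v solves the system dv_k/dt = λ(v_{k-1}-v_k) - (1-v_{k+1})^d + (1-v_k)^d with v_0 ≡ 1 and ∑_k v_k(0) < ∞, then for each k ≥ 1, ∑_{i≥k} v_i(t) - ∑_{i≥k} v_i(0) = ∫_0^t [λ(v_{k-1}(s) - v*_{k-1}) + (1-v_k(s))^d - (1-v*_k)^d] ds, where v* is defined by v*_0 = 1, v*_k = 1-(1-λ v*_{k-1})^{1/d}. -/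
/-!
Write `Φₘ = λ vₘ + (1 - vₘ₊₁)^d` for the flux across level `m`, so that the ODE reads
`v'ₘ₊₁ = Φₘ - Φₘ₊₁` and the partial tail sums `∑_{i<N} v_{k+1+i}` have derivative `Φₖ - Φₖ₊N`.
Since `0 ≤ Φ ≤ λ + 1`, these partial sums grow by at most `(λ + 1) t`, so `∑ vₘ(t) < ∞`,
`vₘ(t) → 0` and `Φₖ₊N → 1` pointwise, and dominated convergence lets `N → ∞`. The fixed-point
relation says exactly that `λ v*ₖ + (1 - v*ₖ₊₁)^d = 1`.
-/

open Filter Topology Set Finset MeasureTheory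

namespace FluidLimit

def flux (lam : ℝ) (d : ℕ) (v : ℕ → ℝ → ℝ) (m : ℕ) (s : ℝ) : ℝ :=
  lam * v m s + (1 - v (m + 1) s) ^ d

lemma lam_mul_add_one_sub_pow_eq_one {lam : ℝ} (hl0 : 0 ≤ lam) (hl1 : lam ≤ 1) {d : ℕ}
    (hd : d ≠ 0) {w : ℕ → ℝ} (hw0 : w 0 = 1)
    (hw : ∀ k, w (k + 1) = 1 - (1 - lam * w k) ^ (1 / (d : ℝ))) (k : ℕ) :
    lam * w k + (1 - w (k + 1)) ^ d = 1 := by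
  have hmem : ∀ k, w k ∈ Icc (0 : ℝ) 1 := by
    intro k
    induction k with
    | zero => simp [hw0]
    | succ n ih =>
      have hx0 : 0 ≤ 1 - lam * w n := by nlinarith [ih.1, ih.2]
      have hx1 : 1 - lam * w n ≤ 1 := by nlinarith [ih.1]
      rw [hw n]
      constructor
      · linarith [Real.rpow_le_one hx0 hx1 (by positivity : (0 : ℝ) ≤ 1 / d)]
      · linarith [Real.rpow_nonneg hx0 (1 / (d : ℝ))]
  have hx0 : 0 ≤ 1 - lam * w k := by nlinarith [(hmem k).1, (hmem k).2]
  rw [hw k, sub_sub_cancel, one_div, Real.rpow_inv_natCast_pow hx0 hd]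
  ring

variable {lam : ℝ} {d : ℕ} {v : ℕ → ℝ → ℝ}

lemma continuousOn_of_hasDerivAt (hv0 : ∀ t, 0 ≤ t → v 0 t = 1)
    (hderiv : ∀ m t, 0 ≤ t →
      HasDerivAt (v (m + 1)) (flux lam d v m t - flux lam d v (m + 1) t) t)
    (m : ℕ) : ContinuousOn (v m) (Ici 0) := by
  cases m with
  | zero => exact continuousOn_const.congr fun s hs => hv0 s hs
  | succ n => exact fun s hs => (hderiv n s hs).continuousAt.continuousWithinAt

lemma continuousOn_flux (hv : ∀ m, ContinuousOn (v m) (Ici 0)) (m : ℕ) :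
    ContinuousOn (flux lam d v m) (Ici 0) :=
  (continuousOn_const.mul (hv m)).add ((continuousOn_const.sub (hv (m + 1))).pow d)

lemma flux_mem_Icc (hl0 : 0 ≤ lam) (hbdd : ∀ k t, 0 ≤ t → v k t ∈ Icc (0 : ℝ) 1)
    (m : ℕ) {s : ℝ} (hs : 0 ≤ s) : flux lam d v m s ∈ Icc 0 (lam + 1) := by
  obtain ⟨h0, h1⟩ := hbdd m s hs
  obtain ⟨h0', h1'⟩ := hbdd (m + 1) s hs
  have hpow0 : 0 ≤ (1 - v (m + 1) s) ^ d := pow_nonneg (by linarith) d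
  have hpow1 : (1 - v (m + 1) s) ^ d ≤ 1 := pow_le_one₀ (by linarith) (by linarith)
  constructor <;> simp only [flux] <;> nlinarith

lemma norm_flux_sub_le (hl0 : 0 ≤ lam) (hbdd : ∀ k t, 0 ≤ t → v k t ∈ Icc (0 : ℝ) 1)
    (m n : ℕ) {s : ℝ} (hs : 0 ≤ s) :
    ‖flux lam d v m s - flux lam d v n s‖ ≤ lam + 1 := by
  obtain ⟨hm0, hm1⟩ := flux_mem_Icc (d := d) hl0 hbdd m hs
  obtain ⟨hn0, hn1⟩ := flux_mem_Icc (d := d) hl0 hbdd n hs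
  rw [Real.norm_eq_abs, abs_sub_le_iff]
  constructor <;> linarith

lemma sum_range_sub_eq_integral_flux (hv0 : ∀ t, 0 ≤ t → v 0 t = 1)
    (hderiv : ∀ m t, 0 ≤ t →
      HasDerivAt (v (m + 1)) (flux lam d v m t - flux lam d v (m + 1) t) t)
    (k N : ℕ) {t : ℝ} (ht : 0 ≤ t) :
    ∑ i ∈ range N, v (k + 1 + i) t - ∑ i ∈ range N, v (k + 1 + i) 0
      = ∫ s in (0 : ℝ)..t, (flux lam d v k s - flux lam d v (k + N) s) := by
  have hIcc : uIcc 0 t ⊆ Ici (0 : ℝ) := by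
    rw [uIcc_of_le ht]; exact Icc_subset_Ici_self
  have hsum_deriv : ∀ s ∈ uIcc 0 t, HasDerivAt (fun u => ∑ i ∈ range N, v (k + 1 + i) u)
      (flux lam d v k s - flux lam d v (k + N) s) s := by
    intro s hs
    have hterm : ∀ i ∈ range N, HasDerivAt (v (k + 1 + i))
        (flux lam d v (k + i) s - flux lam d v (k + i + 1) s) s := fun i _ => by
      simpa only [add_right_comm k i 1] using hderiv (k + i) s (hIcc hs)
    simpa only [sum_range_sub' (fun i => flux lam d v (k + i) s), add_zero, add_assoc]
      using HasDerivAt.fun_sum hterm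
  have hv := continuousOn_of_hasDerivAt hv0 hderiv
  have hint : IntervalIntegrable (fun s => flux lam d v k s - flux lam d v (k + N) s)
      volume 0 t :=
    (((continuousOn_flux hv k).sub (continuousOn_flux hv (k + N))).mono hIcc).intervalIntegrable
  exact (intervalIntegral.integral_eq_sub_of_hasDerivAt hsum_deriv hint).symm

lemma summable_of_summable_zero (hl0 : 0 ≤ lam) (hv0 : ∀ t, 0 ≤ t → v 0 t = 1)
    (hbdd : ∀ k t, 0 ≤ t → v k t ∈ Icc (0 : ℝ) 1)
    (hderiv : ∀ m t, 0 ≤ t →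
      HasDerivAt (v (m + 1)) (flux lam d v m t - flux lam d v (m + 1) t) t)
    (hsum0 : Summable (fun k => v (k + 1) 0)) {s : ℝ} (hs : 0 ≤ s) :
    Summable (fun m => v m s) := by
  refine (summable_nat_add_iff 1).mp <| summable_of_sum_range_le
    (c := ∑' i, v (i + 1) 0 + (lam + 1) * s) (fun i => (hbdd (i + 1) s hs).1) fun N => ?_
  have hflux := intervalIntegral.norm_integral_le_of_norm_le_const
    (a := 0) (b := s) fun u hu => norm_flux_sub_le hl0 hbdd (d := d) 0 N (uIoc_of_le hs ▸ hu).1.le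
  rw [sub_zero, abs_of_nonneg hs, Real.norm_eq_abs] at hflux
  have hpartial := sum_range_sub_eq_integral_flux hv0 hderiv 0 N hs
  simp only [zero_add, add_comm 1] at hpartial
  have hle0 : ∑ i ∈ range N, v (i + 1) 0 ≤ ∑' i, v (i + 1) 0 :=
    hsum0.sum_le_tsum _ fun i _ => (hbdd (i + 1) 0 le_rfl).1
  linarith [le_abs_self (∫ u in (0 : ℝ)..s, (flux lam d v 0 u - flux lam d v N u))]

lemma tendsto_flux_add_atTop {s : ℝ} (hsum : Summable fun m => v m s) (k : ℕ) :
    Tendsto (fun N => flux lam d v (k + N) s) atTop (𝓝 1) := by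
  have hv : Tendsto (fun m => v m s) atTop (𝓝 0) := hsum.tendsto_atTop_zero
  have h0 : Tendsto (fun N => v (k + N) s) atTop (𝓝 0) :=
    hv.comp (tendsto_atTop_mono (fun N => by simp only [id]; omega) tendsto_id)
  have h1 : Tendsto (fun N => v (k + N + 1) s) atTop (𝓝 0) :=
    hv.comp (tendsto_atTop_mono (fun N => by simp only [id]; omega) tendsto_id)
  simpa [flux] using (h0.const_mul lam).add ((h1.const_sub 1).pow d)

lemma tendsto_integral_flux_sub (hl0 : 0 ≤ lam) (hv0 : ∀ t, 0 ≤ t → v 0 t = 1)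
    (hbdd : ∀ k t, 0 ≤ t → v k t ∈ Icc (0 : ℝ) 1)
    (hderiv : ∀ m t, 0 ≤ t →
      HasDerivAt (v (m + 1)) (flux lam d v m t - flux lam d v (m + 1) t) t)
    (hsum0 : Summable (fun k => v (k + 1) 0)) (k : ℕ) {t : ℝ} (ht : 0 ≤ t) :
    Tendsto (fun N => ∫ s in (0 : ℝ)..t, (flux lam d v k s - flux lam d v (k + N) s)) atTop
      (𝓝 (∫ s in (0 : ℝ)..t, (flux lam d v k s - 1))) := by
  have hIoc : uIoc 0 t ⊆ Ici (0 : ℝ) := by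
    rw [uIoc_of_le ht]; exact Ioc_subset_Ioi_self.trans Ioi_subset_Ici_self
  have hv := continuousOn_of_hasDerivAt hv0 hderiv
  refine intervalIntegral.tendsto_integral_filter_of_dominated_convergence (fun _ => lam + 1)
    (Eventually.of_forall fun N => ?_) (Eventually.of_forall fun N => ?_)
    intervalIntegrable_const (ae_of_all _ fun s hs => ?_)
  · exact (((continuousOn_flux hv k).sub (continuousOn_flux hv (k + N))).mono hIoc)
      |>.aestronglyMeasurable measurableSet_uIoc
  · exact ae_of_all _ fun s hs => norm_flux_sub_le hl0 hbdd k (k + N) (hIoc hs)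
  · exact (tendsto_flux_add_atTop
      (summable_of_summable_zero hl0 hv0 hbdd hderiv hsum0 (hIoc hs)) k).const_sub _

end FluidLimit

open FluidLimit in
theorem stmt15_general (lam : ℝ) (hl0 : 0 < lam) (hl1 : lam < 1) (d : ℕ) (hd : 1 ≤ d)
    (v : ℕ → ℝ → ℝ)
    (hv0 : ∀ t, 0 ≤ t → v 0 t = 1)
    (hbdd : ∀ k t, 0 ≤ t → v k t ∈ Set.Icc (0 : ℝ) 1)
    (hode : ∀ k t, 0 ≤ t → HasDerivAt (v (k + 1))
      (lam * (v k t - v (k + 1) t) - (1 - v (k + 2) t) ^ d + (1 - v (k + 1) t) ^ d) t)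
    (hsum0 : Summable (fun k => v (k + 1) 0))
    (w : ℕ → ℝ) (hw0 : w 0 = 1)
    (hw : ∀ k, w (k + 1) = 1 - (1 - lam * w k) ^ (1 / (d : ℝ))) :
    ∀ k t, 0 ≤ t →
      (∑' i, v (k + 1 + i) t) - (∑' i, v (k + 1 + i) 0)
        = ∫ s in (0 : ℝ)..t,
            (lam * (v k s - w k) + (1 - v (k + 1) s) ^ d - (1 - w (k + 1)) ^ d) := by
  intro k t ht
  have hderiv : ∀ m t, 0 ≤ t →
      HasDerivAt (v (m + 1)) (flux lam d v m t - flux lam d v (m + 1) t) t := fun m t ht => by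
    convert hode m t ht using 1
    simp only [flux]
    ring
  have htail : ∀ s, 0 ≤ s → Summable fun i => v (k + 1 + i) s := fun s hs =>
    (summable_of_summable_zero hl0.le hv0 hbdd hderiv hsum0 hs).comp_injective
      (add_right_injective (k + 1))
  have hlim : Tendsto
      (fun N => ∑ i ∈ range N, v (k + 1 + i) t - ∑ i ∈ range N, v (k + 1 + i) 0) atTop
      (𝓝 (∑' i, v (k + 1 + i) t - ∑' i, v (k + 1 + i) 0)) :=
    (htail t ht).hasSum.tendsto_sum_nat.sub (htail 0 le_rfl).hasSum.tendsto_sum_nat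
  simp only [sum_range_sub_eq_integral_flux hv0 hderiv k _ ht] at hlim
  rw [tendsto_nhds_unique hlim (tendsto_integral_flux_sub hl0.le hv0 hbdd hderiv hsum0 k ht)]
  refine intervalIntegral.integral_congr fun s _ => ?_
  rw [flux]
  linear_combination lam_mul_add_one_sub_pow_eq_one hl0.le hl1.le (by omega) hw0 hw k

/-- integral identity for tail sums of the fluid limit: for k ≥ 1,
∑_{i≥k} v_i(t) - ∑_{i≥k} v_i(0)
  = ∫_0^t [λ(v_{k-1}(s) - v*_{k-1}) + (1-v_k(s))^d - (1-v*_k)^d] ds.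
(Here index k of the statement is k+1 below.) -/
theorem stmt15 (lam : ℝ) (hl0 : 0 < lam) (hl1 : lam < 1) (d : ℕ) (hd : 1 ≤ d)
    (v : ℕ → ℝ → ℝ)
    (hv0 : ∀ t, 0 ≤ t → v 0 t = 1)
    (hbdd : ∀ k t, 0 ≤ t → v k t ∈ Set.Icc (0 : ℝ) 1)
    (hmono : ∀ k t, 0 ≤ t → v (k + 1) t ≤ v k t)
    (hode : ∀ k t, 0 ≤ t → HasDerivAt (v (k + 1))
      (lam * (v k t - v (k + 1) t) - (1 - v (k + 2) t) ^ d + (1 - v (k + 1) t) ^ d) t)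
    (hsum0 : Summable (fun k => v (k + 1) 0))
    (w : ℕ → ℝ) (hw0 : w 0 = 1)
    (hw : ∀ k, w (k + 1) = 1 - (1 - lam * w k) ^ (1 / (d : ℝ))) :
    ∀ k t, 0 ≤ t →
      (∑' i, v (k + 1 + i) t) - (∑' i, v (k + 1 + i) 0)
        = ∫ s in (0 : ℝ)..t,
            (lam * (v k s - w k) + (1 - v (k + 1) s) ^ d - (1 - w (k + 1)) ^ d) :=
  stmt15_general lam hl0 hl1 d hd v hv0 hbdd hode hsum0 w hw0 hw
end

section
/- Fix 0 < λ < 1 and d ≥ 2. Define v*_0 = 1, v*_k = 1-(1-λ v*_{k-1})^{1/d}, and c_k = v*_k/(λ/d)^k. Suppose k_0 is such that v*_{k_0-1} < 1/d and c_k < c_{k-1} + c_{k-1}² (d/2)(λ/d)^k for all k > k_0. Then c_k < c_{k_0}(1 + λ + λ² + ... + λ^{k-k_0}) for all k > k_0, and hence c_k < c_{k_0}/(1-λ) uniformly in k > k_0. -/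
/-!
Writing `S_n = 1 + λ + ⋯ + λⁿ`, the bound `c_{k₀+n} ≤ c_{k₀} S_n` propagates along the recursion
as soon as the quadratic term is dominated by the next summand, i.e.
`(c_{k₀} S_n)² (d/2) (λ/d)^{k₀+n+1} ≤ c_{k₀} λ^{n+1}`. Since `c_{k₀} (λ/d)^{k₀} = v*_{k₀} ≤ λ v*_{k₀-1} < 1/d`
and `S_n ≤ n + 1`, this reduces to `(n+1)² ≤ 2 d^{n+1}`, which holds for `d ≥ 2`.
Finally `S_n ≤ 1/(1-λ)`.
-/

open Finset

lemma succ_sq_le_two_pow_add_two : ∀ n : ℕ, (n + 1) ^ 2 ≤ 2 ^ (n + 2)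
  | 0 | 1 | 2 => by norm_num
  | n + 3 => calc
    (n + 3 + 1) ^ 2 ≤ 2 * (n + 2 + 1) ^ 2 := by ring_nf; omega
    _ ≤ 2 * 2 ^ (n + 2 + 2) := Nat.mul_le_mul_left 2 (succ_sq_le_two_pow_add_two (n + 2))
    _ = 2 ^ (n + 3 + 2) := by ring

lemma geom_sum_le_card {x : ℝ} (hx0 : 0 ≤ x) (hx1 : x ≤ 1) (n : ℕ) :
    ∑ i ∈ range n, x ^ i ≤ n := by
  simpa using sum_le_card_nsmul (range n) (x ^ ·) 1 fun i _ => pow_le_one₀ hx0 hx1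

lemma geom_sum_le_one_div_one_sub {x : ℝ} (hx0 : 0 ≤ x) (hx1 : x < 1) (n : ℕ) :
    ∑ i ∈ range n, x ^ i ≤ 1 / (1 - x) := by
  have := geom_sum_Ico_le_of_lt_one (m := 0) (n := n) hx0 hx1
  rwa [← range_eq_Ico, pow_zero] at this

lemma lt_mul_geom_sum_of_lt_add_sq {b q : ℕ → ℝ} {C lam : ℝ} (hb : ∀ n, 0 ≤ b n)
    (hq : ∀ n, 0 ≤ q n) (h0 : b 0 ≤ C) (hstep : ∀ n, b (n + 1) < b n + b n ^ 2 * q n)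
    (hsmall : ∀ n, (C * ∑ i ∈ range (n + 1), lam ^ i) ^ 2 * q n ≤ C * lam ^ (n + 1)) (n : ℕ) :
    b (n + 1) < C * ∑ i ∈ range (n + 2), lam ^ i := by
  have hsucc : ∀ n, b n ≤ C * ∑ i ∈ range (n + 1), lam ^ i →
      b (n + 1) < C * ∑ i ∈ range (n + 2), lam ^ i := by
    intro n hn
    have hsq := mul_le_mul_of_nonneg_right (pow_le_pow_left₀ (hb n) hn 2) (hq n)
    rw [sum_range_succ _ (n + 1), mul_add]
    linarith [hstep n, hsmall n]
  have hle : ∀ n, b n ≤ C * ∑ i ∈ range (n + 1), lam ^ i := by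
    intro n
    induction n with
    | zero => simpa using h0
    | succ n ih => exact (hsucc n ih).le
  exact hsucc n (hle n)

lemma one_sub_one_sub_rpow_le {x p : ℝ} (hx0 : 0 ≤ x) (hx1 : x ≤ 1) (hp : p ≤ 1) :
    1 - (1 - x) ^ p ≤ x := by
  linarith [Real.self_le_rpow_of_le_one (sub_nonneg.2 hx1) (by linarith) hp]

lemma rpow_recursion_mem_Icc {lam p : ℝ} {v : ℕ → ℝ}
    (hv : ∀ k, v (k + 1) = 1 - (1 - lam * v k) ^ p) (hl0 : 0 ≤ lam) (hl1 : lam ≤ 1)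
    (hp : 0 ≤ p) (hv0 : v 0 = 1) (k : ℕ) : v k ∈ Set.Icc 0 1 := by
  induction k with
  | zero => simp [hv0]
  | succ k ih =>
    have hlv : lam * v k ∈ Set.Icc 0 1 :=
      ⟨mul_nonneg hl0 ih.1, mul_le_one₀ hl1 ih.1 ih.2⟩
    have hbase : 0 ≤ 1 - lam * v k := sub_nonneg.2 hlv.2
    rw [hv k]
    exact ⟨sub_nonneg.2 (Real.rpow_le_one hbase (by linarith [hlv.1]) hp),
      by linarith [Real.rpow_nonneg hbase p]⟩

lemma rpow_recursion_succ_le {lam p : ℝ} {v : ℕ → ℝ}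
    (hv : ∀ k, v (k + 1) = 1 - (1 - lam * v k) ^ p) (hp : p ≤ 1) {k : ℕ}
    (hk0 : 0 ≤ lam * v k) (hk1 : lam * v k ≤ 1) :
    v (k + 1) ≤ lam * v k :=
  (hv k).trans_le (one_sub_one_sub_rpow_le hk0 hk1 hp)

lemma sq_mul_geom_tail_le {lam C S d : ℝ} {k0 n : ℕ} (hl : 0 < lam) (hd : 2 ≤ d) (hC : 0 ≤ C)
    (hCd : C * (lam / d) ^ k0 ≤ 1 / d) (hS0 : 0 ≤ S) (hS : S ≤ n + 1) :
    (C * S) ^ 2 * (d / 2 * (lam / d) ^ (k0 + n + 1)) ≤ C * lam ^ (n + 1) := by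
  have hd0 : 0 < d := by linarith
  have key : C * (lam / d) ^ k0 * S ^ 2 ≤ 2 * d ^ n := calc
    C * (lam / d) ^ k0 * S ^ 2 ≤ 1 / d * (n + 1) ^ 2 :=
      mul_le_mul hCd (pow_le_pow_left₀ hS0 hS 2) (by positivity) (by positivity)
    _ ≤ 1 / d * 2 ^ (n + 2) := by gcongr; exact_mod_cast succ_sq_le_two_pow_add_two n
    _ = 1 / d * (2 * 2 ^ (n + 1)) := by ring
    _ ≤ 1 / d * (2 * d ^ (n + 1)) := by gcongr
    _ = 2 * d ^ n := by field_simp; ring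
  calc (C * S) ^ 2 * (d / 2 * (lam / d) ^ (k0 + n + 1))
      = C * lam ^ (n + 1) * (C * (lam / d) ^ k0 * S ^ 2) / (2 * d ^ n) := by
        rw [add_assoc, pow_add, div_pow lam d (n + 1), pow_succ d n]; field_simp
    _ ≤ C * lam ^ (n + 1) * (2 * d ^ n) / (2 * d ^ n) := by gcongr
    _ = C * lam ^ (n + 1) := by field_simp

/-- induction step in the O((λ/d)^k) tail bound: if
v*_{k_0-1} < 1/d and c_k < c_{k-1} + c_{k-1}² (d/2)(λ/d)^k for k > k_0, then
c_k < c_{k_0}(1+λ+⋯+λ^{k-k_0}) and hence c_k < c_{k_0}/(1-λ) for k > k_0. -/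
theorem stmt16 (lam : ℝ) (hl0 : 0 < lam) (hl1 : lam < 1) (d : ℕ) (hd : 2 ≤ d)
    (v : ℕ → ℝ) (hv0 : v 0 = 1)
    (hv : ∀ k, v (k + 1) = 1 - (1 - lam * v k) ^ (1 / (d : ℝ)))
    (c : ℕ → ℝ) (hc : ∀ k, c k = v k / (lam / d) ^ k)
    (k0 : ℕ) (hk0 : 1 ≤ k0) (hvk0 : v (k0 - 1) < 1 / d)
    (hstep : ∀ k, k0 < k → c k < c (k - 1) + (c (k - 1)) ^ 2 * (d / 2) * (lam / d) ^ k) :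
    ∀ k, k0 < k →
      c k < c k0 * (∑ i ∈ Finset.range (k - k0 + 1), lam ^ i) ∧
      c k < c k0 / (1 - lam) := by
  intro k hk
  obtain ⟨n, rfl⟩ : ∃ n, k = k0 + n + 1 := ⟨k - k0 - 1, by omega⟩
  have hd' : (2 : ℝ) ≤ d := by exact_mod_cast hd
  have hvI := rpow_recursion_mem_Icc hv hl0.le hl1.le (by positivity) hv0
  have hcnn : ∀ k, 0 ≤ c k := fun k => by rw [hc]; exact div_nonneg (hvI k).1 (by positivity)
  have hck0 : c k0 * (lam / d) ^ k0 ≤ 1 / d := by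
    rw [hc, div_mul_cancel₀ _ (by positivity)]
    obtain ⟨k, rfl⟩ : ∃ k, k0 = k + 1 := ⟨k0 - 1, by omega⟩
    have hp : 1 / (d : ℝ) ≤ 1 := by rw [div_le_one (by positivity)]; linarith
    calc v (k + 1) ≤ lam * v k := rpow_recursion_succ_le hv hp (mul_nonneg hl0.le (hvI k).1)
          (mul_le_one₀ hl1.le (hvI k).1 (hvI k).2)
      _ ≤ v k := mul_le_of_le_one_left (hvI k).1 hl1.le
      _ ≤ 1 / d := by simpa using hvk0.le
  have hbound := lt_mul_geom_sum_of_lt_add_sq (b := fun n => c (k0 + n))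
    (q := fun n => d / 2 * (lam / d) ^ (k0 + n + 1)) (fun n => hcnn _) (fun n => by positivity)
    le_rfl (fun n => by simpa [mul_assoc, ← add_assoc] using hstep (k0 + n + 1) (by omega))
    (fun n => sq_mul_geom_tail_le hl0 hd' (hcnn k0) hck0 (sum_nonneg fun i _ => by positivity)
      (by simpa using geom_sum_le_card hl0.le hl1.le (n + 1))) n
  rw [show k0 + n + 1 - k0 + 1 = n + 2 by omega]
  refine ⟨hbound, hbound.trans_le ?_⟩
  rw [div_eq_mul_one_div]
  exact mul_le_mul_of_nonneg_left (geom_sum_le_one_div_one_sub hl0.le hl1 _) (hcnn k0)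
end
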